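/- Let δ = ±1, let k₀, k₁, k₂ ∈ ℝ \ {0}, k₃ ∈ ℝ, let η ∈ ℝ with η ≠ 0, and let q : ℝ² → ℝ be a smooth function of (u_x, v_x) with k₂·q_{v_x} − k₁·q_{u_x} ≠ 0 everywhere. Let u, v : U → ℝ be smooth functions on an open set U ⊆ ℝ² satisfying on U: u_{xt} = (k₀/(k₂q_{v_x} − k₁q_{u_x}))·[ q_{v_x} + (k₁v + k₂u + k₃)(δk₁(k₁v_x + k₂u_x) − q·q_{v_x}) ], v_{xt} = (−k₀/(k₂q_{v_x} − k₁q_{u_x}))·[ q_{u_x} + (k₁v + k₂u + k₃)(δk₂(k₁v_x + k₂u_x) − q·q_{u_x}) ], where q and its partial derivatives are evaluated at (u_x, v_x). Define F₁₁ = η(k₁v_x + k₂u_x), F₁₂ = 0, F₂₁ = η², F₂₂ = k₀(k₁v + k₂u) + k₀k₃, F₃₁ = η·q(u_x, v_x), F₃₂ = k₀/η. Then on U the structure equations hold: −∂_t F₁₁ + ∂_x F₁₂ = F₃₁F₂₂ − F₃₂F₂₁, −∂_t F₂₁ + ∂_x F₂₂ = F₁₁F₃₂ − F₁₂F₃₁,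 −∂_t F₃₁ + ∂_x F₃₂ = δ(F₁₁F₂₂ − F₁₂F₂₁); hence this family of systems describes pseudospherical surfaces (δ = 1), resp. spherical surfaces (δ = −1), with these associated functions. -/

import Mathlib

open Real

/-- Partial derivative in the `x` direction of a function on the `(x, t)` plane. -/
noncomputable def pdx (f : ℝ × ℝ → ℝ) (p : ℝ × ℝ) : ℝ := fderiv ℝ f p (1, 0)

/-- Partial derivative in the `t` direction of a function on the `(x, t)` plane. -/
noncomputable def pdt (f : ℝ × ℝ → ℝ) (p : ℝ × ℝ) : ℝ := fderiv ℝ f p (0, 1)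

/-- The structure equations of a surface of constant Gaussian curvature `-δ`. -/
def StructEqs (δ : ℝ) (U : Set (ℝ × ℝ)) (F11 F12 F21 F22 F31 F32 : ℝ × ℝ → ℝ) : Prop :=
  ∀ p ∈ U,
    -(pdt F11 p) + pdx F12 p = F31 p * F22 p - F32 p * F21 p ∧
    -(pdt F21 p) + pdx F22 p = F11 p * F32 p - F12 p * F31 p ∧
    -(pdt F31 p) + pdx F32 p = δ * (F11 p * F22 p - F12 p * F21 p)

/-- Partial derivative of a function of two real variables with respect to the first variable. -/
noncomputable def d1 (f : ℝ × ℝ → ℝ) (q : ℝ × ℝ) : ℝ := fderiv ℝ f q (1, 0)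

/-- Partial derivative of a function of two real variables with respect to the second variable. -/
noncomputable def d2 (f : ℝ × ℝ → ℝ) (q : ℝ × ℝ) : ℝ := fderiv ℝ f q (0, 1)

/-!
At each point the second structure equation is immediate, and after the chain rule the first and
third are the two combinations `k₁v_xt + k₂u_xt = k₀(1 - Lq)` and `q_{u_x}u_xt + q_{v_x}v_xt =
-δk₀LS` of the system, with `L = k₁v + k₂u + k₃` and `S = k₁v_x + k₂u_x`: in both, the denominator
`k₂q_{v_x} - k₁q_{u_x}` cancels against the same factor produced by the numerators.
-/

lemma pdx_const (c : ℝ) (p : ℝ × ℝ) : pdx (fun _ => c) p = 0 := by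
  simp [pdx]

lemma pdt_const (c : ℝ) (p : ℝ × ℝ) : pdt (fun _ => c) p = 0 := by
  simp [pdt]

lemma ContDiffOn.differentiableAt_pdx {n : WithTop ℕ∞} {u : ℝ × ℝ → ℝ} {U : Set (ℝ × ℝ)}
    {p : ℝ × ℝ} (hu : ContDiffOn ℝ n u U) (hn : 2 ≤ n) (hU : IsOpen U) (hp : p ∈ U) :
    DifferentiableAt ℝ (pdx u) p := by
  have hux : ContDiffOn ℝ 1 (pdx u) U :=
    ((hu.of_le hn).fderiv_of_isOpen hU le_rfl).clm_apply contDiffOn_const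
  exact (hux.differentiableOn one_ne_zero).differentiableAt (hU.mem_nhds hp)

lemma fderiv_apply_pair (q : ℝ × ℝ → ℝ) (z : ℝ × ℝ) (a b : ℝ) :
    fderiv ℝ q z (a, b) = a * d1 q z + b * d2 q z := by
  have hab : ((a, b) : ℝ × ℝ) = a • ((1 : ℝ), (0 : ℝ)) + b • ((0 : ℝ), (1 : ℝ)) := by simp
  rw [hab, map_add, map_smul, map_smul, smul_eq_mul, smul_eq_mul, d1, d2]

section Calculus

variable {E : Type*} [NormedAddCommGroup E] [NormedSpace ℝ E]

lemma fderiv_const_mul_linear_comb_apply {f g : E → ℝ} {x : E} (hf : DifferentiableAt ℝ f x)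
    (hg : DifferentiableAt ℝ g x) (a b c : ℝ) (e : E) :
    fderiv ℝ (fun w => c * (a * f w + b * g w)) x e
      = c * (a * fderiv ℝ f x e + b * fderiv ℝ g x e) := by
  have h : HasFDerivAt (fun w => c * (a * f w + b * g w)) _ x :=
    ((hf.hasFDerivAt.const_mul a).add (hg.hasFDerivAt.const_mul b)).const_mul c
  rw [h.fderiv]
  simp only [smul_apply, add_apply, smul_eq_mul]

lemma fderiv_const_mul_comp_prodMk_apply {q : ℝ × ℝ → ℝ} {f g : E → ℝ} {x : E}
    (hq : DifferentiableAt ℝ q (f x, g x)) (hf : DifferentiableAt ℝ f x)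
    (hg : DifferentiableAt ℝ g x) (c : ℝ) (e : E) :
    fderiv ℝ (fun w => c * q (f w, g w)) x e
      = c * (fderiv ℝ f x e * d1 q (f x, g x) + fderiv ℝ g x e * d2 q (f x, g x)) := by
  have h : HasFDerivAt (fun w => c * q (f w, g w)) _ x :=
    (hq.hasFDerivAt.comp x (hf.hasFDerivAt.prodMk hg.hasFDerivAt)).const_mul c
  rw [h.fderiv, smul_apply, smul_eq_mul, ContinuousLinearMap.comp_apply]
  exact congrArg (c * ·) (fderiv_apply_pair q _ _ _)

end Calculus

section System

/- `uxt, vxt` are `u_xt, v_xt` as given by the system; `q, qu, qv` are `q` and its partials at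
`(u_x, v_x)`, `L = k₁v + k₂u + k₃` and `S = k₁v_x + k₂u_x`. -/
variable {k0 k1 k2 δ L S q qu qv uxt vxt : ℝ}

lemma k1_mul_vxt_add_k2_mul_uxt_eq (hW : k2 * qv - k1 * qu ≠ 0)
    (huxt : uxt = k0 / (k2 * qv - k1 * qu) * (qv + L * (δ * k1 * S - q * qv)))
    (hvxt : vxt = -k0 / (k2 * qv - k1 * qu) * (qu + L * (δ * k2 * S - q * qu))) :
    k1 * vxt + k2 * uxt = k0 * (1 - L * q) := by
  rw [huxt, hvxt]
  field_simp
  ring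

lemma uxt_mul_qu_add_vxt_mul_qv_eq (hW : k2 * qv - k1 * qu ≠ 0)
    (huxt : uxt = k0 / (k2 * qv - k1 * qu) * (qv + L * (δ * k1 * S - q * qv)))
    (hvxt : vxt = -k0 / (k2 * qv - k1 * qu) * (qu + L * (δ * k2 * S - q * qu))) :
    uxt * qu + vxt * qv = -(δ * k0 * L * S) := by
  rw [huxt, hvxt]
  field_simp
  ring

end System

theorem corollary_Ccincoparametros_describes_pss_ss_general (δ k0 k1 k2 k3 η : ℝ)
    (hη : η ≠ 0)
    (qf : ℝ × ℝ → ℝ) (hqf : ContDiff ℝ (⊤ : ℕ∞) qf)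
    (hW : ∀ w : ℝ × ℝ, k2 * d2 qf w - k1 * d1 qf w ≠ 0)
    (U : Set (ℝ × ℝ)) (hU : IsOpen U)
    (u v : ℝ × ℝ → ℝ)
    (hu : ContDiffOn ℝ (⊤ : ℕ∞) u U) (hv : ContDiffOn ℝ (⊤ : ℕ∞) v U)
    (heq1 : ∀ p ∈ U, pdt (pdx u) p =
      k0 / (k2 * d2 qf (pdx u p, pdx v p) - k1 * d1 qf (pdx u p, pdx v p)) *
        (d2 qf (pdx u p, pdx v p) +
          (k1 * v p + k2 * u p + k3) *
            (δ * k1 * (k1 * pdx v p + k2 * pdx u p)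
              - qf (pdx u p, pdx v p) * d2 qf (pdx u p, pdx v p))))
    (heq2 : ∀ p ∈ U, pdt (pdx v) p =
      -k0 / (k2 * d2 qf (pdx u p, pdx v p) - k1 * d1 qf (pdx u p, pdx v p)) *
        (d1 qf (pdx u p, pdx v p) +
          (k1 * v p + k2 * u p + k3) *
            (δ * k2 * (k1 * pdx v p + k2 * pdx u p)
              - qf (pdx u p, pdx v p) * d1 qf (pdx u p, pdx v p)))) :
    StructEqs δ U
      (fun w => η * (k1 * pdx v w + k2 * pdx u w))
      (fun _ => 0)
      (fun _ => η ^ 2)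
      (fun w => k0 * (k1 * v w + k2 * u w) + k0 * k3)
      (fun w => η * qf (pdx u w, pdx v w))
      (fun _ => k0 / η) := by
  intro p hp
  have hsmooth : (2 : WithTop ℕ∞) ≤ ((⊤ : ℕ∞) : WithTop ℕ∞) := WithTop.coe_le_coe.2 le_top
  have hud : DifferentiableAt ℝ u p :=
    (hu.differentiableOn (by simp)).differentiableAt (hU.mem_nhds hp)
  have hvd : DifferentiableAt ℝ v p :=
    (hv.differentiableOn (by simp)).differentiableAt (hU.mem_nhds hp)
  have huxd := hu.differentiableAt_pdx hsmooth hU hp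
  have hvxd := hv.differentiableAt_pdx hsmooth hU hp
  have hqd : DifferentiableAt ℝ qf (pdx u p, pdx v p) := hqf.differentiable (by simp) _
  have hF11 : pdt (fun w => η * (k1 * pdx v w + k2 * pdx u w)) p
      = η * (k1 * pdt (pdx v) p + k2 * pdt (pdx u) p) :=
    fderiv_const_mul_linear_comb_apply hvxd huxd k1 k2 η _
  have hF22 : pdx (fun w => k0 * (k1 * v w + k2 * u w) + k0 * k3) p
      = k0 * (k1 * pdx v p + k2 * pdx u p) := by
    rw [pdx, fderiv_add_const]
    exact fderiv_const_mul_linear_comb_apply hvd hud k1 k2 k0 _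
  have hF31 : pdt (fun w => η * qf (pdx u w, pdx v w)) p
      = η * (pdt (pdx u) p * d1 qf (pdx u p, pdx v p)
          + pdt (pdx v) p * d2 qf (pdx u p, pdx v p)) :=
    fderiv_const_mul_comp_prodMk_apply hqd huxd hvxd η _
  refine ⟨?_, ?_, ?_⟩
  · rw [hF11, pdx_const, k1_mul_vxt_add_k2_mul_uxt_eq (hW _) (heq1 p hp) (heq2 p hp)]
    field_simp
    ring
  · rw [pdt_const, hF22]
    field_simp
    ring
  · rw [hF31, pdx_const, uxt_mul_qu_add_vxt_mul_qv_eq (hW _) (heq1 p hp) (heq2 p hp)]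
    ring

/-- The family of systems (40) describes pseudospherical surfaces (`δ = 1`),
resp. spherical surfaces (`δ = −1`). -/
theorem corollary_Ccincoparametros_describes_pss_ss (δ k0 k1 k2 k3 η : ℝ)
    (hδ : δ = 1 ∨ δ = -1) (hk0 : k0 ≠ 0) (hk1 : k1 ≠ 0) (hk2 : k2 ≠ 0) (hη : η ≠ 0)
    (qf : ℝ × ℝ → ℝ) (hqf : ContDiff ℝ (⊤ : ℕ∞) qf)
    (hW : ∀ w : ℝ × ℝ, k2 * d2 qf w - k1 * d1 qf w ≠ 0)
    (U : Set (ℝ × ℝ)) (hU : IsOpen U)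
    (u v : ℝ × ℝ → ℝ)
    (hu : ContDiffOn ℝ (⊤ : ℕ∞) u U) (hv : ContDiffOn ℝ (⊤ : ℕ∞) v U)
    (heq1 : ∀ p ∈ U, pdt (pdx u) p =
      k0 / (k2 * d2 qf (pdx u p, pdx v p) - k1 * d1 qf (pdx u p, pdx v p)) *
        (d2 qf (pdx u p, pdx v p) +
          (k1 * v p + k2 * u p + k3) *
            (δ * k1 * (k1 * pdx v p + k2 * pdx u p)
              - qf (pdx u p, pdx v p) * d2 qf (pdx u p, pdx v p))))
    (heq2 : ∀ p ∈ U, pdt (pdx v) p =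
      -k0 / (k2 * d2 qf (pdx u p, pdx v p) - k1 * d1 qf (pdx u p, pdx v p)) *
        (d1 qf (pdx u p, pdx v p) +
          (k1 * v p + k2 * u p + k3) *
            (δ * k2 * (k1 * pdx v p + k2 * pdx u p)
              - qf (pdx u p, pdx v p) * d1 qf (pdx u p, pdx v p)))) :
    StructEqs δ U
      (fun w => η * (k1 * pdx v w + k2 * pdx u w))
      (fun _ => 0)
      (fun _ => η ^ 2)
      (fun w => k0 * (k1 * v w + k2 * u w) + k0 * k3)
      (fun w => η * qf (pdx u w, pdx v w))
      (fun _ => k0 / η) :=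
  corollary_Ccincoparametros_describes_pss_ss_general δ k0 k1 k2 k3 η hη qf hqf hW U hU u v hu hv
    heq1 heq2
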